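/- For the secondary Hochschild cohomology of a triple (A,B,ε) with coefficients in an A-bimodule M (with ε(α)m = mε(α)): H^0((A,B,ε);M) = M^A = {m ∈ M : am = ma for all a ∈ A}, and H^1((A,B,ε);M) ≅ Der_B(A,M)/Inn(A,M), the B-linear k-derivations A → M modulo inner derivations. -/
import Mathlib


open Finset MulOpposite

namespace SecondaryHochschild

variable {k : Type*} [CommRing k] {A : Type*} [Ring A] [Algebra k A]
  {B : Type*} [CommRing B] [Algebra k B]
  {M : Type*} [AddCommGroup M] [Module k M] [Module A M] [Module Aᵐᵒᵖ M]

/-- Secondary Hochschild cochains with coefficients in the `A`-bimodule `M`.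
A cochain of degree `n` is modelled as a function of the diagonal entries
`a 0, …, a (n-1)` and the upper entries `b i j` (for `i < j < n`) of the
triangular tensor matrix. -/
abbrev Cochain (A B M : Type*) : Type _ := (ℕ → A) → (ℕ → ℕ → B) → M

/-- Reindexing map merging positions `i` and `i+1`. -/
def mIdx (i j : ℕ) : ℕ := if j ≤ i then j else j + 1

/-- Diagonal of the `i`-th inner face `M^{1,n}_{i,i+1}` of the tensor matrix `(a, b)`. -/
def faceA (ε : B →ₐ[k] A) (i : ℕ) (a : ℕ → A) (b : ℕ → ℕ → B) : ℕ → A :=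
  fun j => if j = i then ε (b i (i+1)) * a i * a (i+1) else a (mIdx i j)

/-- Upper entries of the `i`-th inner face `M^{1,n}_{i,i+1}`. -/
def faceB (i : ℕ) (b : ℕ → ℕ → B) : ℕ → ℕ → B :=
  fun j l =>
    if j = i then b i (mIdx i l) * b (i+1) (mIdx i l)
    else if l = i then b (mIdx i j) i * b (mIdx i j) (i+1)
    else b (mIdx i j) (mIdx i l)

/-- The secondary Hochschild differential `δ^ε_n : C^n((A,B,ε);M) → C^{n+1}((A,B,ε);M)`;
the left `A`-action is written `•` and the right `A`-action is `op a • m`. -/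
def δ (ε : B →ₐ[k] A) (n : ℕ) (f : Cochain A B M) : Cochain A B M :=
  fun a b =>
    (a 0 * ε (∏ j ∈ Finset.range n, b 0 (j+1))) •
        f (fun j => a (j+1)) (fun j l => b (j+1) (l+1))
      + ∑ i ∈ Finset.range n, (-1 : ℤ)^(i+1) • f (faceA ε i a b) (faceB i b)
      + (-1 : ℤ)^(n+1) • (op (a n * ε (∏ j ∈ Finset.range n, b j n)) • f a b)


/-- `H^0((A,B,ε);M) = M^A = {m ∈ M : am = ma}` and
`H^1((A,B,ε);M) ≅ Der_B(A,M)/Inn(A,M)`: a `0`-cochain `m` is a cocycle iff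
`m ∈ M^A`; a `1`-cochain `u` is a cocycle iff `u` is a `B`-linear derivation; and
it is a coboundary iff `u` is an inner derivation. -/
theorem H0_and_H1
    {k : Type*} [Field k] {A : Type*} [Ring A] [Algebra k A]
    {B : Type*} [CommRing B] [Algebra k B]
    {M : Type*} [AddCommGroup M] [Module k M] [Module A M] [Module Aᵐᵒᵖ M]
    [SMulCommClass A Aᵐᵒᵖ M]
    (ε : B →ₐ[k] A) (hcent : ∀ β : B, ε β ∈ Set.center A)
    (hsym : ∀ (β : B) (m : M), ε β • m = op (ε β) • m) :
    -- `H^0((A,B,ε);M) = M^A`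
    (∀ m : M, δ ε 0 (fun _ _ => m) = 0 ↔ ∀ a : A, a • m = op a • m)
    -- `1`-cocycles are exactly the `B`-linear derivations
    ∧ (∀ u : A → M,
        δ ε 1 (fun a _ => u (a 0)) = 0
          ↔ ((∀ a b : A, u (a * b) = a • u b + op b • u a)
              ∧ ∀ (α : B) (a : A), u (ε α * a) = ε α • u a))
    -- `1`-coboundaries are exactly the inner derivations
    ∧ (∀ u : A → M,
        (∃ m : M, (fun a _ => u (a 0)) = δ ε 0 (fun _ _ => m))
          ↔ ∃ m : M, ∀ a : A, u a = a • m - op a • m) := by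
  have hd0 : ∀ (m : M) (a : ℕ → A) (b : ℕ → ℕ → B),
      δ ε 0 (fun _ _ => m) a b = a 0 • m - op (a 0) • m := by
    intro m a b
    simp [δ, sub_eq_add_neg]
  have hd1 : ∀ (u : A → M) (a : ℕ → A) (b : ℕ → ℕ → B),
      δ ε 1 (fun a _ => u (a 0)) a b
        = (a 0 * ε (b 0 1)) • u (a 1) - u (ε (b 0 1) * a 0 * a 1)
          + op (a 1 * ε (b 0 1)) • u (a 0) := by
    intro u a b
    simp [δ, faceA, sub_eq_add_neg]
  refine ⟨?_, ?_, ?_⟩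
  · intro m
    constructor
    · intro h a
      have h' := congrFun (congrFun h (fun _ => a)) (fun _ _ => 1)
      rw [hd0] at h'
      simpa [sub_eq_zero] using h'
    · intro h
      funext a b
      rw [hd0]
      simp [h (a 0)]
  · intro u
    constructor
    · intro h
      have key : ∀ (x y : A) (β : B),
          (x * ε β) • u y - u (ε β * x * y) + op (y * ε β) • u x = 0 := by
        intro x y β
        have h' := congrFun (congrFun h (fun j => if j = 0 then x else y))
          (fun _ _ => β)
        rw [hd1] at h'
        simpa using h'
      have hder : ∀ x y : A, u (x * y) = x • u y + op y • u x := by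
        intro x y
        have h' := key x y 1
        simp only [map_one, mul_one, one_mul] at h'
        rw [sub_add_eq_add_sub, sub_eq_zero] at h'
        exact h'.symm
      have h1 : u 1 = 0 := by
        have h' := hder 1 1
        simp only [mul_one, one_smul, op_one] at h'
        rwa [left_eq_add] at h'
      refine ⟨hder, fun β a => ?_⟩
      have h' := key 1 a β
      simp only [one_mul, mul_one, h1, smul_zero, add_zero] at h'
      rw [sub_eq_zero] at h'
      exact h'.symm
    · rintro ⟨hder, hlin⟩
      funext a b
      simp only [Pi.zero_apply]
      rw [hd1, mul_assoc, hlin (b 0 1) (a 0 * a 1), hder (a 0) (a 1),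
        ← (hcent (b 0 1)).comm (a 0), op_mul, mul_smul, mul_smul,
        ← hsym, smul_add]
      abel
  · intro u
    constructor
    · rintro ⟨m, hm⟩
      refine ⟨m, fun a => ?_⟩
      have h' := congrFun (congrFun hm (fun _ => a)) (fun _ _ => 1)
      rw [hd0] at h'
      exact h'
    · rintro ⟨m, hm⟩
      refine ⟨m, ?_⟩
      funext a b
      rw [hd0]
      exact hm (a 0)

end SecondaryHochschild
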